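/- arXiv:2210.00855 — 4 statements merged into one kernel-verified Lean document; each statement's English description precedes it below -/
import Mathlib

section
/- For all α ≤ β in NC^{(ε,ι)}(k), the Möbius function of the poset NC^{(ε,ι)}(k) factorizes over the blocks of ker ι: μ_{NC^{(ε,ι)}(k)}(α, β) = Π_{B ∈ ker ι} μ_{NC(#B)}(α_B, β_B), where α_B and β_B are the restrictions of α and β to the block B, regarded as noncrossing partitions of a totally ordered set of size #B. -/
set_option linter.unusedSectionVars false
set_option linter.deprecated false

open Finset Equiv

namespace LRH

variable {n m : ℕ}

/-- The ε-matrix determined by the interaction sets `K`. -/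
def eps (K : Fin m → Finset (Fin n)) (i j : Fin m) : ℕ :=
  if K i ∩ K j = ∅ then 1 else 0

section Partitions

variable {β : Type*} [LinearOrder β]

/-- A partition (equivalence relation) is (ε,ι)-noncrossing. -/
def EpsNC (K : Fin m → Finset (Fin n)) (ι : β → Fin m) (α : Setoid β) : Prop :=
  ∀ i p j q : β, i < p → p < j → j < q →
    α.r i j → α.r p q → ¬ α.r i p → eps K (ι i) (ι p) = 1

/-- Noncrossing partition of a linearly ordered set. -/
def IsNoncrossing (α : Setoid β) : Prop :=
  ∀ i p j q : β, i < p → p < j → j < q →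
    α.r i j → α.r p q → ¬ α.r i p → False

/-- Pair partition: every class has exactly two elements. -/
def IsPairPartition (α : Setoid β) : Prop :=
  ∀ i : β, {j | α.r i j}.ncard = 2

/-- The set `NC^{(ε,ι)}`. -/
def NCSet (K : Fin m → Finset (Fin n)) (ι : β → Fin m) : Set (Setoid β) :=
  {α | α ≤ Setoid.ker ι ∧ EpsNC K ι α}

/-- The set `NC₂^{(ε,ι)}` of (ε,ι)-noncrossing pair partitions. -/
def NC2Set (K : Fin m → Finset (Fin n)) (ι : β → Fin m) : Set (Setoid β) :=
  {α | IsPairPartition α ∧ α ≤ Setoid.ker ι ∧ EpsNC K ι α}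

/-- Restriction of a partition to a subset (as a partition of the subtype). -/
def restrictSetoid (α : Setoid β) (p : β → Prop) : Setoid {x // p x} :=
  Setoid.comap Subtype.val α

end Partitions

section Perms

variable {β : Type*} [LinearOrder β] [Fintype β]

/-- The full cycle on a finite subset `J`, in increasing order, fixing the complement. -/
def fullCycleOn (J : Finset β) : Equiv.Perm β :=
  (J.sort (· ≤ ·)).formPerm

/-- Number of cycles of a permutation, counting fixed points. -/
def numCycles (σ : Equiv.Perm β) : ℕ :=
  σ.cycleType.card + (Fintype.card β - σ.support.card)

/-- `|σ|`, the minimal number of transpositions needed to write σ; equals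
`card − numCycles`. -/
def permNorm (σ : Equiv.Perm β) : ℕ :=
  σ.support.card - σ.cycleType.card

/-- The permutation induced on `J` (extended by the identity off `J`), when `σ`
preserves `J`; junk value `1` otherwise. -/
def permRestrict (σ : Equiv.Perm β) (J : Finset β) : Equiv.Perm β :=
  if h : ∀ x : β, x ∈ J ↔ σ x ∈ J then Equiv.Perm.ofSubtype (σ.subtypePerm (fun x => (h x).symm)) else 1

/-- `σ` restricted to `J` is noncrossing, i.e. lies on the geodesic `1 - σ_J - γ_J`. -/
def NCOn (σ : Equiv.Perm β) (J : Finset β) : Prop :=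
  permNorm (permRestrict σ J) + permNorm ((permRestrict σ J)⁻¹ * fullCycleOn J) = J.card - 1

/-- `σ_J` and `τ_J` lie on a common geodesic `1 - σ_J - τ_J - γ_J`. -/
def geodesic3 (σ τ : Equiv.Perm β) (J : Finset β) : Prop :=
  permNorm (permRestrict σ J) + permNorm ((permRestrict σ J)⁻¹ * permRestrict τ J)
    + permNorm ((permRestrict τ J)⁻¹ * fullCycleOn J) = J.card - 1

end Perms

variable {k : ℕ}

/-- `J_s = {j : s ∈ K_{ι_j}}`. -/
def Jset (K : Fin m → Finset (Fin n)) (ι : Fin k → Fin m) (s : Fin n) : Finset (Fin k) :=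
  Finset.univ.filter (fun j => s ∈ K (ι j))

/-- The set `S_NC^{(ε,ι)}(γ_k)` of (ε,ι)-noncrossing permutations. -/
def SNCSet (K : Fin m → Finset (Fin n)) (ι : Fin k → Fin m) : Set (Equiv.Perm (Fin k)) :=
  {σ | (∀ j, ι (σ j) = ι j) ∧ ∀ s : Fin n, NCOn σ (Jset K ι s)}

/-- The relation `σ ≤ τ` on `S_NC^{(ε,ι)}(γ_k)`. -/
def geoLe (K : Fin m → Finset (Fin n)) (ι : Fin k → Fin m) (σ τ : Equiv.Perm (Fin k)) : Prop :=
  ∀ s : Fin n, geodesic3 σ τ (Jset K ι s)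

section PMap

variable {β : Type*} [LinearOrder β] [Fintype β]

/-- The equivalence class of `i` as a finset. -/
noncomputable def classFinset (α : Setoid β) (i : β) : Finset β :=
  letI := Classical.decPred (α.r i)
  Finset.univ.filter (α.r i)

lemma mem_classFinset {α : Setoid β} {i j : β} : j ∈ classFinset α i ↔ α.r i j := by
  classical
  simp [classFinset]

lemma self_mem_classFinset (α : Setoid β) (i : β) : i ∈ classFinset α i :=
  mem_classFinset.mpr (α.refl i)

lemma classFinset_eq_of_rel {α : Setoid β} {i j : β} (h : α.r i j) :
    classFinset α i = classFinset α j := by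
  ext x
  simp only [mem_classFinset]
  exact ⟨fun hx => α.trans (α.symm h) hx, fun hx => α.trans h hx⟩

/-- The map `P` from partitions to permutations: each class, listed increasingly,
becomes a cycle. -/
noncomputable def partitionToPerm (α : Setoid β) : Equiv.Perm β :=
  Equiv.ofBijective (fun i => ((classFinset α i).sort (· ≤ ·)).formPerm i) (by
    rw [← Finite.injective_iff_bijective]
    intro a b hab
    dsimp only at hab
    have ha : ((classFinset α a).sort (· ≤ ·)).formPerm a ∈ (classFinset α a).sort (· ≤ ·) :=
      List.formPerm_apply_mem_of_mem ((Finset.mem_sort _).mpr (self_mem_classFinset α a))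
    have hb : ((classFinset α b).sort (· ≤ ·)).formPerm b ∈ (classFinset α b).sort (· ≤ ·) :=
      List.formPerm_apply_mem_of_mem ((Finset.mem_sort _).mpr (self_mem_classFinset α b))
    have ha' : α.r a (((classFinset α a).sort (· ≤ ·)).formPerm a) :=
      mem_classFinset.mp ((Finset.mem_sort _).mp ha)
    have hb' : α.r b (((classFinset α b).sort (· ≤ ·)).formPerm b) :=
      mem_classFinset.mp ((Finset.mem_sort _).mp hb)
    have hrel : α.r a b := by
      refine α.iseqv.trans ha' ?_
      rw [hab]
      exact α.iseqv.symm hb'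
    have hcc : classFinset α a = classFinset α b := classFinset_eq_of_rel hrel
    rw [hcc] at hab
    exact ((classFinset α b).sort (· ≤ ·)).formPerm.injective hab)

end PMap

instance setoidFinite {X : Type*} [Finite X] : Finite (Setoid X) :=
  Finite.of_injective (fun s : Setoid X => s.r) fun a b h => by
    cases a; cases b; dsimp at h; subst h; rfl

section Mobius

/-- The Möbius function of a finite poset, determined by `μ(x,x) = 1` and
`∑_{x ≤ z ≤ y} μ(z,y) = 0` for `x < y`. -/
noncomputable def mobius {P : Type*} [PartialOrder P] [Fintype P] (a b : P) : ℤ :=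
  letI := Classical.dec
  if a = b then 1
  else if a ≤ b then
    - ∑ z ∈ (Finset.univ.filter (fun z => a < z ∧ z ≤ b)).attach,
        mobius (z : P) b
  else 0
termination_by letI := Classical.dec; (Finset.univ.filter (fun z : P => a < z ∧ z ≤ b)).card
decreasing_by
  classical
  have hz := z.2
  simp only [Finset.mem_filter, Finset.mem_univ, true_and] at hz
  apply Finset.card_lt_card
  rw [Finset.ssubset_iff_of_subset]
  · exact ⟨z, by simp [hz.1, hz.2], by simp⟩
  · intro w hw
    simp only [Finset.mem_filter, Finset.mem_univ, true_and] at hw ⊢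
    exact ⟨lt_trans hz.1 hw.1, hw.2⟩

end Mobius

section Restrict

variable {n m k : ℕ}

lemma restrictSetoid_isNoncrossing {K : Fin m → Finset (Fin n)}
    (hK : ∀ i, (K i).Nonempty) {ι : Fin k → Fin m} {α : Setoid (Fin k)}
    (hα : α ∈ NCSet K ι) (v : Fin m) :
    IsNoncrossing (restrictSetoid α (fun j => ι j = v)) := by
  rintro ⟨i, hi⟩ ⟨p, hp⟩ ⟨j, hj⟩ ⟨q, hq⟩ hip hpj hjq hij hpq hnip
  have h1 : i < p := hip
  have h2 : p < j := hpj
  have h3 : j < q := hjq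
  have hij' : α.r i j := hij
  have hpq' : α.r p q := hpq
  have hnip' : ¬ α.r i p := hnip
  have := hα.2 i p j q h1 h2 h3 hij' hpq' hnip'
  rw [hi, hp] at this
  unfold eps at this
  rw [Finset.inter_self] at this
  rcases hK v with ⟨x, hx⟩
  simp only [(Finset.nonempty_iff_ne_empty.mp ⟨x, hx⟩), if_false] at this
  exact absurd this (by simp [Finset.nonempty_iff_ne_empty.mp ⟨x, hx⟩])

end Restrict

end LRH

/-!
Restriction to the fibres of `ι` is an order isomorphism from the interval `[α, β]` of
`NC^{(ε,ι)}(k)` onto the product of the intervals `[α_B, β_B]` of the lattices `NC(B)`: a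
partition between `α` and `β` that is noncrossing on every block of `ker ι` is automatically
`(ε,ι)`-noncrossing, since each of its crossings either lies in one block of `ker ι` or is a
crossing of `β`. The Möbius function is the unique solution of its recursion, hence invariant
under order isomorphisms, unchanged on passing to an interval, and multiplicative on products;
fibres outside the image of `ι` are empty and contribute `1`.
-/
namespace LRH

section Mobius

open scoped Classical

variable {P : Type*} [PartialOrder P] [Fintype P]

lemma mobius_self (a : P) : mobius a a = 1 := by
  rw [mobius]; simp

lemma mobius_of_lt {a b : P} (h : a < b) :
    mobius a b = -∑ z ∈ univ.filter (fun z => a < z ∧ z ≤ b), mobius z b := by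
  rw [mobius, if_neg h.ne, if_pos h.le, neg_inj, filter_congr_decidable]
  exact sum_attach _ fun z => mobius z b

lemma sum_filter_Icc_eq_add_sum_filter_Ioc {M : Type*} [AddCommMonoid M] (f : P → M) {a b : P}
    (h : a ≤ b) :
    ∑ z ∈ univ.filter (fun z => a ≤ z ∧ z ≤ b), f z
      = f a + ∑ z ∈ univ.filter (fun z => a < z ∧ z ≤ b), f z := by
  have hIcc : univ.filter (fun z => a ≤ z ∧ z ≤ b)
      = insert a (univ.filter (fun z => a < z ∧ z ≤ b)) := by
    ext z
    simp only [mem_insert, mem_filter, mem_univ, true_and, le_iff_lt_or_eq (a := a)]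
    grind
  rw [hIcc, sum_insert (by simp)]

lemma sum_mobius {a b : P} (h : a ≤ b) :
    ∑ z ∈ univ.filter (fun z => a ≤ z ∧ z ≤ b), mobius z b = if a = b then 1 else 0 := by
  rcases h.lt_or_eq with hlt | rfl
  · rw [sum_filter_Icc_eq_add_sum_filter_Ioc _ h, mobius_of_lt hlt, if_neg hlt.ne,
      neg_add_cancel]
  · rw [sum_filter_Icc_eq_add_sum_filter_Ioc _ h, if_pos rfl, mobius_self, add_eq_left]
    refine sum_eq_zero fun z hz => ?_
    obtain ⟨haz, hza⟩ := (mem_filter.mp hz).2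
    exact (haz.not_ge hza).elim

lemma eq_mobius_of_sum_eq_zero {b : P} (f : P → ℤ) (hb : f b = 1)
    (hsum : ∀ a < b, ∑ z ∈ univ.filter (fun z => a ≤ z ∧ z ≤ b), f z = 0) {a : P}
    (hab : a ≤ b) : f a = mobius a b := by
  induction a using WellFoundedGT.induction with
  | _ a ih =>
  rcases hab.lt_or_eq with hlt | rfl
  · have hfa := hsum a hlt
    rw [sum_filter_Icc_eq_add_sum_filter_Ioc _ hab] at hfa
    rw [eq_neg_of_add_eq_zero_left hfa, mobius_of_lt hlt]
    refine congrArg Neg.neg (sum_congr rfl fun z hz => ?_)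
    simp only [mem_filter, mem_univ, true_and] at hz
    exact ih z hz.1 hz.2
  · rw [hb, mobius_self]

lemma mobius_orderIso {Q : Type*} [PartialOrder Q] [Fintype Q] (e : P ≃o Q) {a b : P}
    (hab : a ≤ b) : mobius (e a) (e b) = mobius a b := by
  refine eq_mobius_of_sum_eq_zero (fun x => mobius (e x) (e b)) (mobius_self _)
    (fun x hxb => ?_) hab
  calc ∑ z ∈ univ.filter (fun z => x ≤ z ∧ z ≤ b), mobius (e z) (e b)
      = ∑ w ∈ univ.filter (fun w => e x ≤ w ∧ w ≤ e b), mobius w (e b) :=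
        sum_nbij' e e.symm (by simp) (by simp [e.le_symm_apply, e.symm_apply_le])
          (fun _ _ => e.symm_apply_apply _) (fun _ _ => e.apply_symm_apply _) (fun _ _ => rfl)
    _ = 0 := by rw [sum_mobius (e.monotone hxb.le), if_neg (e.injective.ne hxb.ne)]

lemma mobius_subtype (S : Set P) [S.OrdConnected] [Fintype S] {a b : P} (ha : a ∈ S) (hb : b ∈ S)
    (hab : a ≤ b) : mobius (⟨a, ha⟩ : S) ⟨b, hb⟩ = mobius a b := by
  refine (eq_mobius_of_sum_eq_zero (fun x : S => mobius (x : P) b) (mobius_self b)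
    (fun x hxb => ?_) (show (⟨a, ha⟩ : S) ≤ ⟨b, hb⟩ from hab)).symm
  have hbox : (univ.filter (fun z : S => x ≤ z ∧ z ≤ ⟨b, hb⟩)).map (Function.Embedding.subtype _)
      = univ.filter (fun z => (x : P) ≤ z ∧ z ≤ b) := by
    ext z
    simp only [mem_map, mem_filter, mem_univ, true_and, Function.Embedding.subtype_apply]
    constructor
    · rintro ⟨z, hz, rfl⟩
      exact hz
    · intro hz
      exact ⟨⟨z, Set.OrdConnected.out ‹_› x.2 hb hz⟩, hz, rfl⟩
  calc ∑ z ∈ univ.filter (fun z : S => x ≤ z ∧ z ≤ ⟨b, hb⟩), mobius (z : P) b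
      = ∑ z ∈ univ.filter (fun z => (x : P) ≤ z ∧ z ≤ b), mobius z b := by rw [← hbox, sum_map]; rfl
    _ = 0 := by
      rw [sum_mobius (Subtype.coe_le_coe.mpr hxb.le), if_neg (Subtype.coe_injective.ne hxb.ne)]

lemma mobius_pi {ι : Type*} [Fintype ι] [DecidableEq ι] {Q : ι → Type*}
    [∀ i, PartialOrder (Q i)] [∀ i, Fintype (Q i)] {a b : ∀ i, Q i} (hab : a ≤ b) :
    mobius a b = ∏ i, mobius (a i) (b i) := by
  refine (eq_mobius_of_sum_eq_zero (fun x => ∏ i, mobius (x i) (b i))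
    (prod_eq_one fun i _ => mobius_self _) (fun x hxb => ?_) hab).symm
  have hbox : univ.filter (fun z => x ≤ z ∧ z ≤ b)
      = Fintype.piFinset fun i => univ.filter (fun t => x i ≤ t ∧ t ≤ b i) := by
    ext z
    simp [Pi.le_def, forall_and]
  obtain ⟨i, hi⟩ : ∃ i, x i ≠ b i := Function.ne_iff.mp hxb.ne
  rw [hbox, ← prod_univ_sum (fun i => univ.filter (fun t => x i ≤ t ∧ t ≤ b i))
    (fun i t => mobius t (b i))]
  exact prod_eq_zero (mem_univ i) (by rw [sum_mobius (hxb.le i), if_neg hi])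

end Mobius

section Fibers

variable {X Y : Type*} [LinearOrder X] {f : X → Y}

lemma restrictSetoid_mono {r s : Setoid X} (h : r ≤ s) (p : X → Prop) :
    restrictSetoid r p ≤ restrictSetoid s p :=
  fun _ _ hxy => h hxy

variable (f) in
def glueFibers (g : ∀ y, Setoid {x // f x = y}) : Setoid X where
  r i j := f i = f j ∧ ∀ y (hi : f i = y) (hj : f j = y), (g y).r ⟨i, hi⟩ ⟨j, hj⟩
  iseqv := by
    refine ⟨fun i => ⟨rfl, fun y hi _ => (g y).refl ⟨i, hi⟩⟩, ?_, ?_⟩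
    · rintro i j ⟨hij, H⟩
      exact ⟨hij.symm, fun y hj hi => (g y).symm (H y hi hj)⟩
    · rintro i j l ⟨hij, Hij⟩ ⟨hjl, Hjl⟩
      exact ⟨hij.trans hjl, fun y hi hl =>
        (g y).trans (Hij y hi (hij.symm.trans hi)) (Hjl y (hij.symm.trans hi) hl)⟩

lemma glueFibers_le_ker (g : ∀ y, Setoid {x // f x = y}) : glueFibers f g ≤ Setoid.ker f :=
  fun _ _ h => h.1

lemma restrictSetoid_glueFibers (g : ∀ y, Setoid {x // f x = y}) (y : Y) :
    restrictSetoid (glueFibers f g) (f · = y) = g y := by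
  ext ⟨i, rfl⟩ ⟨j, hj⟩
  exact ⟨fun h => h.2 _ rfl hj, fun h => ⟨hj.symm, fun _ hi _ => by cases hi; exact h⟩⟩

lemma glueFibers_restrictSetoid {r : Setoid X} (hr : r ≤ Setoid.ker f) :
    glueFibers f (fun y => restrictSetoid r (f · = y)) = r := by
  ext i j
  exact ⟨fun h => h.2 _ rfl h.1.symm, fun h => ⟨hr h, fun _ _ _ => h⟩⟩

lemma le_iff_forall_restrictSetoid_le {r s : Setoid X} (hr : r ≤ Setoid.ker f) :
    r ≤ s ↔ ∀ y, restrictSetoid r (f · = y) ≤ restrictSetoid s (f · = y) :=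
  ⟨fun h _ => restrictSetoid_mono h _, fun h i j hij =>
    h (f i) (show restrictSetoid r (f · = f i) ⟨i, rfl⟩ ⟨j, (hr hij).symm⟩ from hij)⟩

end Fibers

section NoncrossingFibers

variable {n m : ℕ} {K : Fin m → Finset (Fin n)}

lemma mem_NCSet_of_le {β : Type*} [LinearOrder β] {ι : β → Fin m} {z b : Setoid β}
    (hb : b ∈ NCSet K ι) (hzb : z ≤ b)
    (hz : ∀ v, IsNoncrossing (restrictSetoid z (ι · = v))) : z ∈ NCSet K ι := by
  refine ⟨hzb.trans hb.1, fun i p j q hip hpj hjq hij hpq hnip => ?_⟩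
  by_cases hbip : b.r i p
  · have hpi : ι p = ι i := (hb.1 hbip).symm
    exact (hz (ι i) ⟨i, rfl⟩ ⟨p, hpi⟩ ⟨j, (hb.1 (hzb hij)).symm⟩
      ⟨q, (hb.1 (hzb hpq)).symm.trans hpi⟩ hip hpj hjq hij hpq hnip).elim
  · exact hb.2 i p j q hip hpj hjq (hzb hij) (hzb hpq) hbip

variable {k : ℕ} {ι : Fin k → Fin m} (hK : ∀ i, (K i).Nonempty)

def restrictFiber (a : {α : Setoid (Fin k) // α ∈ NCSet K ι}) (v : Fin m) :
    {γ : Setoid {j : Fin k // ι j = v} // IsNoncrossing γ} :=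
  ⟨restrictSetoid a.1 (ι · = v), restrictSetoid_isNoncrossing hK a.2 v⟩

lemma restrictFiber_mono {a b : {α : Setoid (Fin k) // α ∈ NCSet K ι}} (hab : a ≤ b) (v : Fin m) :
    restrictFiber hK a v ≤ restrictFiber hK b v :=
  restrictSetoid_mono hab _

def iccOrderIsoPi (a b : {α : Setoid (Fin k) // α ∈ NCSet K ι}) :
    Set.Icc a b ≃o ∀ v, Set.Icc (restrictFiber hK a v) (restrictFiber hK b v) where
  toFun z v :=
    ⟨restrictFiber hK z.1 v, restrictFiber_mono hK z.2.1 v, restrictFiber_mono hK z.2.2 v⟩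
  invFun g :=
    have hb : glueFibers ι (fun v => (g v).1.1) ≤ b.1 :=
      (le_iff_forall_restrictSetoid_le (glueFibers_le_ker _)).mpr fun v => by
        rw [restrictSetoid_glueFibers]; exact (g v).2.2
    ⟨⟨glueFibers ι (fun v => (g v).1.1), mem_NCSet_of_le b.2 hb fun v => by
        rw [restrictSetoid_glueFibers]; exact (g v).1.2⟩,
      (le_iff_forall_restrictSetoid_le a.2.1).mpr fun v => by
        rw [restrictSetoid_glueFibers]; exact (g v).2.1,
      hb⟩
  left_inv z := Subtype.ext <| Subtype.ext <| glueFibers_restrictSetoid z.1.2.1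
  right_inv g := funext fun v => Subtype.ext <| Subtype.ext <| restrictSetoid_glueFibers _ v
  map_rel_iff' {z z'} := (le_iff_forall_restrictSetoid_le (f := ι) z.1.2.1).symm

lemma mobius_eq_prod_restrictFiber [Fintype {α : Setoid (Fin k) // α ∈ NCSet K ι}]
    [∀ v, Fintype {γ : Setoid {j : Fin k // ι j = v} // IsNoncrossing γ}]
    {a b : {α : Setoid (Fin k) // α ∈ NCSet K ι}} (hab : a ≤ b) :
    mobius a b = ∏ v, mobius (restrictFiber hK a v) (restrictFiber hK b v) := by
  classical
  let e := iccOrderIsoPi hK a b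
  have hab' : (⟨a, le_rfl, hab⟩ : Set.Icc a b) ≤ ⟨b, hab, le_rfl⟩ := hab
  calc mobius a b = mobius (⟨a, le_rfl, hab⟩ : Set.Icc a b) ⟨b, hab, le_rfl⟩ :=
        (mobius_subtype _ _ _ hab).symm
    _ = mobius (e ⟨a, le_rfl, hab⟩) (e ⟨b, hab, le_rfl⟩) := (mobius_orderIso e hab').symm
    _ = ∏ v, mobius (e ⟨a, le_rfl, hab⟩ v) (e ⟨b, hab, le_rfl⟩ v) := mobius_pi (e.monotone hab')
    _ = _ := prod_congr rfl fun v _ => mobius_subtype _ _ _ (restrictFiber_mono hK hab v)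

lemma restrictFiber_eq_of_notMem_range (a b : {α : Setoid (Fin k) // α ∈ NCSet K ι}) {v : Fin m}
    (hv : v ∉ Set.range ι) : restrictFiber hK a v = restrictFiber hK b v :=
  Subtype.ext <| Setoid.ext fun j => (hv ⟨j.1, j.2⟩).elim

end NoncrossingFibers

end LRH

open LRH in
theorem statement2_general {n m k : ℕ}
    (K : Fin m → Finset (Fin n)) (hK : ∀ i, (K i).Nonempty) (ι : Fin k → Fin m)
    (a b : {α : Setoid (Fin k) // α ∈ NCSet K ι}) (hab : a ≤ b) :
    (letI : Fintype {α : Setoid (Fin k) // α ∈ NCSet K ι} := Fintype.ofFinite _;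
      mobius a b) =
    ∏ v ∈ Finset.univ.image ι,
      (letI : Fintype {γ : Setoid {j : Fin k // ι j = v} // IsNoncrossing γ} :=
        Fintype.ofFinite _;
       mobius
        (⟨restrictSetoid a.val (fun j => ι j = v), restrictSetoid_isNoncrossing hK a.2 v⟩ :
          {γ : Setoid {j : Fin k // ι j = v} // IsNoncrossing γ})
        ⟨restrictSetoid b.val (fun j => ι j = v), restrictSetoid_isNoncrossing hK b.2 v⟩) := by
  let _ : Fintype {α : Setoid (Fin k) // α ∈ NCSet K ι} := Fintype.ofFinite _
  let _ (v : Fin m) : Fintype {γ : Setoid {j : Fin k // ι j = v} // IsNoncrossing γ} :=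
    Fintype.ofFinite _
  rw [mobius_eq_prod_restrictFiber hK hab]
  refine (prod_subset (subset_univ _) fun v _ hv => ?_).symm
  rw [restrictFiber_eq_of_notMem_range hK a b (by simpa using hv), mobius_self]

open LRH in
/-- The Möbius function of the poset `NC^{(ε,ι)}(k)` factorizes over the
blocks of ker ι into Möbius functions of noncrossing partition lattices. -/
theorem statement2 {n m k : ℕ} (hn : 1 ≤ n) (hm : 1 ≤ m) (hk : 1 ≤ k)
    (K : Fin m → Finset (Fin n)) (hK : ∀ i, (K i).Nonempty) (ι : Fin k → Fin m)
    (a b : {α : Setoid (Fin k) // α ∈ NCSet K ι}) (hab : a ≤ b) :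
    (letI : Fintype {α : Setoid (Fin k) // α ∈ NCSet K ι} := Fintype.ofFinite _;
      mobius a b) =
    ∏ v ∈ Finset.univ.image ι,
      (letI : Fintype {γ : Setoid {j : Fin k // ι j = v} // IsNoncrossing γ} :=
        Fintype.ofFinite _;
       mobius
        (⟨restrictSetoid a.val (fun j => ι j = v), restrictSetoid_isNoncrossing hK a.2 v⟩ :
          {γ : Setoid {j : Fin k // ι j = v} // IsNoncrossing γ})
        ⟨restrictSetoid b.val (fun j => ι j = v), restrictSetoid_isNoncrossing hK b.2 v⟩) :=
  statement2_general K hK ι a b hab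
end

section
/- If ker ι is a noncrossing partition of {1,…,k}, then NC^{(ε,ι)}(k) = {α ∈ NC(k) : α refines ker ι}; that is, a partition of {1,…,k} refining ker ι is (ε,ι)-noncrossing if and only if it is noncrossing. -/
/-!
Two indices with the same colour `ι` have `ε = 0`, because the sets `K` are nonempty, so the
only crossings an (ε,ι)-noncrossing partition may have join blocks of different colours.
A partition refining `ker ι` with such a crossing would make `ker ι` itself crossing.
-/

set_option linter.unusedSectionVars false
set_option linter.deprecated false

open Finset Equiv

namespace LRH

variable {n m : ℕ}

variable {k : ℕ}

/-- The interaction sets of the XY-model: `K ι = {ι, ι+1}`. -/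
def KXY (n : ℕ) : Fin (n - 1) → Finset (Fin n) := fun i =>
  {⟨i.val, Nat.lt_of_lt_of_le i.isLt (Nat.sub_le n 1)⟩,
   ⟨i.val + 1, by have := i.isLt; omega⟩}

end LRH

namespace LRH

variable {n m : ℕ} {β : Type*} [LinearOrder β] {K : Fin m → Finset (Fin n)} {ι : β → Fin m}
  {α : Setoid β}

lemma eps_self_eq_zero {i : Fin m} (hK : (K i).Nonempty) : eps K i i = 0 := by
  simp [eps, Finset.nonempty_iff_ne_empty.mp hK]

lemma IsNoncrossing.epsNC (h : IsNoncrossing α) : EpsNC K ι α :=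
  fun i p j q hip hpj hjq hij hpq hnip => (h i p j q hip hpj hjq hij hpq hnip).elim

lemma EpsNC.isNoncrossing (hK : ∀ i, (K i).Nonempty) (hker : IsNoncrossing (Setoid.ker ι))
    (hle : α ≤ Setoid.ker ι) (h : EpsNC K ι α) : IsNoncrossing α := by
  intro i p j q hip hpj hjq hij hpq hnip
  have heps : eps K (ι i) (ι p) = 1 := h i p j q hip hpj hjq hij hpq hnip
  by_cases hcol : ι i = ι p
  · rw [hcol, eps_self_eq_zero (hK _)] at heps
    exact zero_ne_one heps
  · exact hker i p j q hip hpj hjq (hle hij) (hle hpq) hcol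

lemma epsNC_iff_isNoncrossing (hK : ∀ i, (K i).Nonempty) (hker : IsNoncrossing (Setoid.ker ι))
    (hle : α ≤ Setoid.ker ι) : EpsNC K ι α ↔ IsNoncrossing α :=
  ⟨EpsNC.isNoncrossing hK hker hle, IsNoncrossing.epsNC⟩

lemma ncSet_eq_of_isNoncrossing_ker (hK : ∀ i, (K i).Nonempty)
    (hker : IsNoncrossing (Setoid.ker ι)) :
    NCSet K ι = {α : Setoid β | α ≤ Setoid.ker ι ∧ IsNoncrossing α} := by
  ext α
  exact and_congr_right (epsNC_iff_isNoncrossing hK hker)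

end LRH

open LRH in
theorem statement4_general {n m k : ℕ}
    (K : Fin m → Finset (Fin n)) (hK : ∀ i, (K i).Nonempty) (ι : Fin k → Fin m)
    (hker : IsNoncrossing (Setoid.ker ι)) :
    NCSet K ι = {α : Setoid (Fin k) | α ≤ Setoid.ker ι ∧ IsNoncrossing α} ∧
    (∀ α : Setoid (Fin k), α ≤ Setoid.ker ι → (EpsNC K ι α ↔ IsNoncrossing α)) :=
  ⟨ncSet_eq_of_isNoncrossing_ker hK hker, fun _ => epsNC_iff_isNoncrossing hK hker⟩

open LRH in
/-- If ker ι is noncrossing then `NC^{(ε,ι)}(k)` consists exactly of the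
noncrossing partitions refining ker ι. -/
theorem statement4 {n m k : ℕ} (hn : 1 ≤ n) (hm : 1 ≤ m) (hk : 1 ≤ k)
    (K : Fin m → Finset (Fin n)) (hK : ∀ i, (K i).Nonempty) (ι : Fin k → Fin m)
    (hker : IsNoncrossing (Setoid.ker ι)) :
    NCSet K ι = {α : Setoid (Fin k) | α ≤ Setoid.ker ι ∧ IsNoncrossing α} ∧
    (∀ α : Setoid (Fin k), α ≤ Setoid.ker ι → (EpsNC K ι α ↔ IsNoncrossing α)) :=
  statement4_general K hK ι hker
end

section
/- For every k ≥ 1, the sum over all maps ι : {1,…,2k} → {1,…,m} of the number of (ε,ι)-noncrossing pair partitions satisfies Σ_ι #NC₂^{(ε,ι)}(2k) ≥ C_k · m(m−1)⋯(m−k+1), where C_k = (1/(k+1))·binom(2k,k) is the k-th Catalan number. This holds for every ε arising from any choice of the subsets K_1,…,K_m. -/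
set_option linter.unusedSectionVars false
set_option linter.deprecated false

open Finset Equiv

/-!
A noncrossing pair partition has no crossings at all, so the (ε,ι)-condition holds vacuously
and it belongs to `NC₂^{(ε,ι)}(2k)` for every `ι` constant on its blocks. Binary trees with
`k` nodes encode distinct noncrossing pair partitions of `2k` points, so there are at least
`catalan k` of them, and each is refined by `m ^ k ≥ m(m-1)⋯(m-k+1)` colourings `ι`.
Counting the pairs `(α, ι)` in both orders gives the bound.
-/

namespace BinaryTree

variable {α : Type*}

/-- Partner of `x` in the noncrossing pairing of the positions `o, …, o + 2 * t.numNodes - 1`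
encoded by `t`: the root pairs `o` with the position right after the left subtree's block, the
left subtree pairs the positions in between and the right subtree those after it. Positions
outside the range are fixed. -/
def partner : BinaryTree α → ℕ → ℕ → ℕ
  | nil, _, x => x
  | node _ l r, o, x =>
    if x = o then o + 2 * l.numNodes + 1
    else if x = o + 2 * l.numNodes + 1 then o
    else if x < o + 2 * l.numNodes + 1 then partner l (o + 1) x
    else partner r (o + 2 * l.numNodes + 2) x

theorem partner_eq_self (t : BinaryTree α) {o x : ℕ} (h : x < o ∨ o + 2 * t.numNodes ≤ x) :
    t.partner o x = x := by
  induction t generalizing o with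
  | nil => rfl
  | node _ l r ihl ihr =>
    simp only [numNodes] at h
    simp only [partner]
    rw [if_neg (by omega), if_neg (by omega)]
    split_ifs
    · exact ihl (by omega)
    · exact ihr (by omega)

@[simp]
theorem partner_node_self (a : α) (l r : BinaryTree α) (o : ℕ) :
    (node a l r).partner o o = o + 2 * l.numNodes + 1 := by
  simp [partner]

@[simp]
theorem partner_node_closer (a : α) (l r : BinaryTree α) (o : ℕ) :
    (node a l r).partner o (o + 2 * l.numNodes + 1) = o := by
  simp [partner]

theorem partner_node_of_lt (a : α) (l r : BinaryTree α) {o x : ℕ} (h₁ : o < x)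
    (h₂ : x < o + 2 * l.numNodes + 1) : (node a l r).partner o x = l.partner (o + 1) x := by
  simp only [partner]
  rw [if_neg (by omega), if_neg (by omega), if_pos h₂]

theorem partner_node_of_gt (a : α) (l r : BinaryTree α) {o x : ℕ}
    (h : o + 2 * l.numNodes + 1 < x) :
    (node a l r).partner o x = r.partner (o + 2 * l.numNodes + 2) x := by
  simp only [partner]
  rw [if_neg (by omega), if_neg (by omega), if_neg (by omega)]

theorem partner_mem_Ico (t : BinaryTree α) {o x : ℕ} (h : x ∈ Set.Ico o (o + 2 * t.numNodes)) :
    t.partner o x ∈ Set.Ico o (o + 2 * t.numNodes) := by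
  induction t generalizing o x with
  | nil => exact h
  | node a l r ihl ihr =>
    simp only [Set.mem_Ico, numNodes] at h ihl ihr ⊢
    rcases lt_trichotomy x (o + 2 * l.numNodes + 1) with hx | rfl | hx
    · by_cases hxo : x = o
      · subst hxo; simp only [partner_node_self]; omega
      rw [partner_node_of_lt a l r (by omega) hx]
      have := @ihl (o + 1) x (by omega)
      omega
    · simp only [partner_node_closer]; omega
    · rw [partner_node_of_gt a l r hx]
      have := @ihr (o + 2 * l.numNodes + 2) x (by omega)
      omega

theorem partner_ne_self (t : BinaryTree α) {o x : ℕ} (h : x ∈ Set.Ico o (o + 2 * t.numNodes)) :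
    t.partner o x ≠ x := by
  induction t generalizing o x with
  | nil => simp at h
  | node a l r ihl ihr =>
    simp only [Set.mem_Ico, numNodes] at h ihl ihr
    rcases lt_trichotomy x (o + 2 * l.numNodes + 1) with hx | rfl | hx
    · by_cases hxo : x = o
      · subst hxo; rw [partner_node_self]; omega
      rw [partner_node_of_lt a l r (by omega) hx]
      exact ihl (by omega)
    · rw [partner_node_closer]; omega
    · rw [partner_node_of_gt a l r hx]
      exact ihr (by omega)

theorem partner_involutive (t : BinaryTree α) (o : ℕ) : Function.Involutive (t.partner o) := by
  intro x
  induction t generalizing o x with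
  | nil => rfl
  | node a l r ihl ihr =>
    rcases lt_trichotomy x (o + 2 * l.numNodes + 1) with hx | rfl | hx
    · rcases lt_trichotomy x o with hxo | rfl | hxo
      · rw [partner_eq_self _ (.inl hxo), partner_eq_self _ (.inl hxo)]
      · rw [partner_node_self, partner_node_closer]
      · have hmem := l.partner_mem_Ico (o := o + 1) (x := x) ⟨by omega, by omega⟩
        rw [Set.mem_Ico] at hmem
        rw [partner_node_of_lt a l r hxo hx, partner_node_of_lt a l r (by omega) (by omega), ihl]
    · rw [partner_node_closer, partner_node_self]
    · have hr : o + 2 * l.numNodes + 1 < r.partner (o + 2 * l.numNodes + 2) x := by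
        by_cases hx' : x < o + 2 * l.numNodes + 2 + 2 * r.numNodes
        · exact (r.partner_mem_Ico ⟨hx, hx'⟩).1
        · rwa [partner_eq_self _ (.inr (by omega))]
      rw [partner_node_of_gt a l r hx, partner_node_of_gt a l r hr, ihr]

theorem not_partner_crossing (t : BinaryTree α) {o x y : ℕ} (hxy : x < y)
    (hy : y < t.partner o x) (hxy' : t.partner o x < t.partner o y) : False := by
  induction t generalizing o x y with
  | nil => simp only [partner] at hy; omega
  | node a l r ihl ihr =>
    rcases lt_trichotomy x (o + 2 * l.numNodes + 1) with hx | rfl | hx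
    · rcases lt_trichotomy x o with hxo | rfl | hxo
      · rw [partner_eq_self _ (.inl hxo)] at hy; omega
      · rw [partner_node_self] at hy hxy'
        rw [partner_node_of_lt a l r hxy hy] at hxy'
        have := l.partner_mem_Ico (o := x + 1) (x := y) ⟨by omega, by omega⟩
        rw [Set.mem_Ico] at this
        omega
      · have hmem := l.partner_mem_Ico (o := o + 1) (x := x) ⟨by omega, by omega⟩
        rw [Set.mem_Ico] at hmem
        rw [partner_node_of_lt a l r hxo hx] at hy hxy'
        rw [partner_node_of_lt a l r (by omega) (by omega)] at hxy'
        exact ihl hxy hy hxy'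
    · rw [partner_node_closer] at hy; omega
    · rw [partner_node_of_gt a l r hx] at hy hxy'
      rw [partner_node_of_gt a l r (by omega)] at hxy'
      exact ihr hxy hy hxy'

theorem eq_of_partner_eq {t t' : BinaryTree Unit} {o : ℕ} (h : t.partner o = t'.partner o) :
    t = t' := by
  induction t generalizing t' o with
  | nil =>
    cases t' with
    | nil => rfl
    | node => have := congrFun h o; simp [partner] at this; omega
  | node a l r ihl ihr =>
    cases t' with
    | nil => have := congrFun h o; simp [partner] at this; omega
    | node a' l' r' =>
      have hl : l.numNodes = l'.numNodes := by
        have := congrFun h o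
        simp only [partner_node_self] at this
        omega
      obtain rfl : l = l' := ihl <| funext fun x => by
        by_cases hx : o < x ∧ x < o + 2 * l.numNodes + 1
        · have := congrFun h x
          rwa [partner_node_of_lt _ _ _ hx.1 hx.2,
            partner_node_of_lt _ _ _ hx.1 (hl ▸ hx.2)] at this
        · rw [partner_eq_self l (by omega), partner_eq_self l' (by omega)]
      obtain rfl : r = r' := ihr <| funext fun x => by
        by_cases hx : o + 2 * l.numNodes + 1 < x
        · have := congrFun h x
          rwa [partner_node_of_gt _ _ _ hx, partner_node_of_gt _ _ _ hx] at this
        · rw [partner_eq_self r (.inl (by omega)), partner_eq_self r' (.inl (by omega))]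
      rfl

end BinaryTree

namespace LRH

section Partitions

variable {β : Type*}

def involutionSetoid {f : β → β} (hf : Function.Involutive f) : Setoid β where
  r x y := x = y ∨ f x = y
  iseqv := by
    refine ⟨fun x => .inl rfl, ?_, ?_⟩
    · rintro x y (rfl | rfl)
      · exact .inl rfl
      · exact .inr (hf x)
    · rintro x y z (rfl | rfl) (rfl | rfl)
      · exact .inl rfl
      · exact .inr rfl
      · exact .inr rfl
      · exact .inl (hf x).symm

theorem involutionSetoid_rel {f : β → β} (hf : Function.Involutive f) {x y : β} :
    involutionSetoid hf x y ↔ x = y ∨ f x = y :=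
  Iff.rfl

theorem card_subtype_le_ker [Finite β] {γ : Type*} (α : Setoid β) :
    Nat.card {ι : β → γ // α ≤ Setoid.ker ι} = Nat.card γ ^ Nat.card (Quotient α) := by
  rw [Nat.card_congr (Setoid.liftEquiv α), Nat.card_fun]

variable [LinearOrder β]

theorem epsNC_of_isNoncrossing {n m : ℕ} (K : Fin m → Finset (Fin n)) (ι : β → Fin m)
    {α : Setoid β} (h : IsNoncrossing α) : EpsNC K ι α :=
  fun i p j q hip hpj hjq hij hpq hip' => (h i p j q hip hpj hjq hij hpq hip').elim

theorem card_quotient_mul_two [Finite β] {α : Setoid β} (h : IsPairPartition α) :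
    Nat.card (Quotient α) * 2 = Nat.card β := by
  classical
  have := Fintype.ofFinite β
  have hfiber : ∀ q : Quotient α, #{x | Quotient.mk α x = q} = 2 := by
    refine Quotient.ind fun i => ?_
    rw [← h i, ← Set.ncard_coe_finset]
    congr 1
    ext x
    simp [Quotient.eq, Setoid.comm' α]
  calc Nat.card (Quotient α) * 2 = ∑ q : Quotient α, #{x | Quotient.mk α x = q} := by
        simp [hfiber]
    _ = Nat.card β := by
        rw [← card_eq_sum_card_fiberwise fun _ _ => mem_univ _, card_univ,
          Nat.card_eq_fintype_card]

end Partitions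

section TreePartitions

variable {α : Type*}

def treeSetoid (t : BinaryTree α) (k : ℕ) : Setoid (Fin (2 * k)) :=
  (involutionSetoid (t.partner_involutive 0)).comap Fin.val

theorem treeSetoid_rel {t : BinaryTree α} {k : ℕ} {i j : Fin (2 * k)} :
    treeSetoid t k i j ↔ i = j ∨ t.partner 0 i = j := by
  rw [treeSetoid, Setoid.comap_rel, involutionSetoid_rel, Fin.val_inj]

theorem isPairPartition_treeSetoid {t : BinaryTree α} {k : ℕ} (ht : t.numNodes = k) :
    IsPairPartition (treeSetoid t k) := by
  intro i
  have hi : (i : ℕ) ∈ Set.Ico 0 (0 + 2 * t.numNodes) := by simp [ht]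
  have hj := (t.partner_mem_Ico hi).2
  set j : Fin (2 * k) := ⟨t.partner 0 i, by omega⟩
  have hclass : {x | treeSetoid t k i x} = {i, j} := by
    ext x
    simp [treeSetoid_rel, j, Fin.ext_iff, eq_comm]
  rw [hclass, Set.ncard_pair]
  exact fun h => t.partner_ne_self hi (congrArg Fin.val h).symm

theorem isNoncrossing_treeSetoid (t : BinaryTree α) (k : ℕ) :
    IsNoncrossing (treeSetoid t k) := by
  intro i p j q hip hpj hjq hij hpq _
  rw [treeSetoid_rel] at hij hpq
  rw [Fin.lt_iff_val_lt_val] at hip hpj hjq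
  rcases hij with rfl | hij
  · omega
  rcases hpq with rfl | hpq
  · omega
  exact t.not_partner_crossing hip (hij ▸ hpj) (by rw [hij, hpq]; exact hjq)

theorem treeSetoid_injOn (k : ℕ) :
    Set.InjOn (treeSetoid · k) {t : BinaryTree Unit | t.numNodes = k} := by
  intro t ht t' ht' h
  simp only [Set.mem_setOf_eq] at ht ht' h
  refine BinaryTree.eq_of_partner_eq (o := 0) (funext fun x => ?_)
  by_cases hx : x < 2 * k
  · have hi : x ∈ Set.Ico 0 (0 + 2 * t.numNodes) := by simp [ht, hx]
    have hj := (t.partner_mem_Ico hi).2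
    have hrel : treeSetoid t k ⟨x, hx⟩ ⟨t.partner 0 x, by omega⟩ :=
      treeSetoid_rel.2 (.inr rfl)
    rw [h, treeSetoid_rel] at hrel
    rcases hrel with hrel | hrel
    · exact absurd (congrArg Fin.val hrel).symm (t.partner_ne_self hi)
    · exact hrel.symm
  · rw [t.partner_eq_self (.inr (by omega)), t'.partner_eq_self (.inr (by omega))]

end TreePartitions

section Counting

variable {β : Type*} [LinearOrder β] [Finite β]

variable (β) in
noncomputable def ncPairPartitions : Finset (Setoid β) :=
  (Set.toFinite {α : Setoid β | IsPairPartition α ∧ IsNoncrossing α}).toFinset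

theorem mem_ncPairPartitions {α : Setoid β} :
    α ∈ ncPairPartitions β ↔ IsPairPartition α ∧ IsNoncrossing α :=
  Set.Finite.mem_toFinset _

theorem catalan_le_card_ncPairPartitions (k : ℕ) :
    catalan k ≤ #(ncPairPartitions (Fin (2 * k))) := by
  rw [← BinaryTree.treesOfNumNodesEq_card_eq_catalan]
  refine card_le_card_of_injOn (treeSetoid · k) (fun t ht => ?_) ?_
  · have ht := BinaryTree.mem_treesOfNumNodesEq.1 ht
    exact mem_ncPairPartitions.2 ⟨isPairPartition_treeSetoid ht, isNoncrossing_treeSetoid t k⟩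
  · exact (treeSetoid_injOn k).mono fun t ht => BinaryTree.mem_treesOfNumNodesEq.1 ht

theorem card_filter_le_ker_of_isPairPartition {k m : ℕ} {α : Setoid (Fin (2 * k))}
    (h : IsPairPartition α)
    [DecidablePred fun ι : Fin (2 * k) → Fin m => α ≤ Setoid.ker ι] :
    #{ι : Fin (2 * k) → Fin m | α ≤ Setoid.ker ι} = m ^ k := by
  have hq : Nat.card (Quotient α) = k := by
    have := card_quotient_mul_two h
    rw [Nat.card_fin] at this
    omega
  rw [← Fintype.card_subtype, ← Nat.card_eq_fintype_card, card_subtype_le_ker, hq,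
    Nat.card_fin]

theorem card_filter_le_ker_le_ncard_NC2Set {n m : ℕ}
    (K : Fin m → Finset (Fin n)) (ι : β → Fin m)
    [DecidablePred fun α : Setoid β => α ≤ Setoid.ker ι] :
    #{α ∈ ncPairPartitions β | α ≤ Setoid.ker ι} ≤ (NC2Set K ι).ncard := by
  rw [← Set.ncard_coe_finset]
  refine Set.ncard_le_ncard (fun α hα => ?_) (Set.toFinite _)
  simp only [coe_filter, mem_ncPairPartitions, Set.mem_setOf_eq] at hα
  exact ⟨hα.1.1, hα.2, epsNC_of_isNoncrossing K ι hα.1.2⟩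

end Counting

end LRH

open LRH in
theorem statement6_general {n m : ℕ} (K : Fin m → Finset (Fin n)) (k : ℕ) :
    catalan k * m.descFactorial k ≤
      ∑ ι : Fin (2 * k) → Fin m, (NC2Set K ι).ncard := by
  classical
  calc catalan k * m.descFactorial k
      ≤ #(ncPairPartitions (Fin (2 * k))) * m ^ k :=
        Nat.mul_le_mul (catalan_le_card_ncPairPartitions k) (Nat.descFactorial_le_pow m k)
    _ = ∑ α ∈ ncPairPartitions (Fin (2 * k)),
          #{ι : Fin (2 * k) → Fin m | α ≤ Setoid.ker ι} := by
        rw [sum_congr rfl fun α hα =>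
          card_filter_le_ker_of_isPairPartition (mem_ncPairPartitions.1 hα).1, sum_const,
          smul_eq_mul]
    _ = ∑ ι : Fin (2 * k) → Fin m,
          #{α ∈ ncPairPartitions (Fin (2 * k)) | α ≤ Setoid.ker ι} := by
        simp only [card_filter]
        exact sum_comm
    _ ≤ ∑ ι, (NC2Set K ι).ncard :=
        sum_le_sum fun ι _ => card_filter_le_ker_le_ncard_NC2Set K ι

open LRH in
/-- For every `k ≥ 1`,
`Σ_{ι : [2k] → [m]} #NC₂^{(ε,ι)}(2k) ≥ C_k · m(m−1)⋯(m−k+1)`, for every ε arising from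
any choice of the interaction sets `K₁, …, K_m`. -/
theorem statement6 {n m : ℕ} (hn : 1 ≤ n) (hm : 1 ≤ m)
    (K : Fin m → Finset (Fin n)) (hK : ∀ i, (K i).Nonempty) (k : ℕ) (hk : 1 ≤ k) :
    catalan k * m.descFactorial k ≤
      ∑ ι : Fin (2 * k) → Fin m, (NC2Set K ι).ncard :=
  statement6_general K k
end

section
/- In the XY-model, let k ≥ 1, let ι : {1,…,k} → {1,…,n−1}, and set J₁ := {j : ι_j = 1}. Every α ∈ NC₂^{(ε,ι)}(k) has each of its blocks contained either in J₁ or in its complement; its restriction α|_{J₁} is a noncrossing pair partition of J₁; and its restriction α|_{J₁ᶜ} belongs to NC₂^{(ε',ι')} of the complement, where ι' is the restriction of ι to {1,…,k}∖J₁ (with values in {2,…,n−1}) and ε' is the corresponding submatrix of ε. Consequently the map α ↦ (α|_{J₁}, α|_{J₁ᶜ}) is injective, so #NC₂^{(ε,ι)}(k) ≤ #NC₂(J₁) · #NC₂^{(ε',ι')}({1,…,k}∖J₁). -/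
set_option linter.unusedSectionVars false
set_option linter.deprecated false

open Finset Equiv

/-!
Every block of an `α ∈ NC₂^{(ε,ι)}(k)` lies in a fibre of `ι`, so `J₁` and its complement are
unions of blocks and `α` is recovered from its two restrictions. The restriction to the
complement inherits all defining properties of `α`; the one to `J₁` is genuinely noncrossing
because `ε_{11} = 0` (the set `K₁` is nonempty), so no two blocks inside `J₁` may cross.
-/

namespace LRH

section Restriction

variable {β : Type*} [LinearOrder β] {n m : ℕ}

lemma isPairPartition_restrictSetoid {α : Setoid β} (hα : IsPairPartition α) {p : β → Prop}
    (hp : ∀ i j, α.r i j → p i → p j) : IsPairPartition (restrictSetoid α p) := by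
  intro i
  have hclass : Subtype.val '' {j | (restrictSetoid α p).r i j} = {j | α.r i j} := by
    ext x
    refine ⟨?_, fun hx => ⟨⟨x, hp _ _ hx i.2⟩, hx, rfl⟩⟩
    rintro ⟨y, hy, rfl⟩
    exact hy
  rw [← hα i, ← hclass, Set.ncard_image_of_injective _ Subtype.val_injective]

lemma restrictSetoid_mem_NC2Set {K : Fin m → Finset (Fin n)} {ι : β → Fin m} {α : Setoid β}
    (hα : α ∈ NC2Set K ι) {p : β → Prop} (hp : ∀ i j, α.r i j → p i → p j) :
    restrictSetoid α p ∈ NC2Set K (fun j : {x // p x} => ι j) :=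
  ⟨isPairPartition_restrictSetoid hα.1 hp, fun _ _ h => hα.2.1 h,
    fun a b c d hab hbc hcd => hα.2.2 a b c d hab hbc hcd⟩

lemma eq_of_restrictSetoid_eq {α α' : Setoid β} {p : β → Prop}
    (hα : ∀ i j, α.r i j → p i → p j) (hα' : ∀ i j, α'.r i j → p i → p j)
    (hp : restrictSetoid α p = restrictSetoid α' p)
    (hnp : restrictSetoid α (fun j => ¬ p j) = restrictSetoid α' (fun j => ¬ p j)) :
    α = α' := by
  ext a b
  by_cases ha : p a <;> by_cases hb : p b
  · exact Setoid.ext_iff.mp hp ⟨a, ha⟩ ⟨b, hb⟩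
  · exact iff_of_false (fun h => hb (hα a b h ha)) (fun h => hb (hα' a b h ha))
  · exact iff_of_false (fun h => ha (hα b a (α.symm h) hb)) (fun h => ha (hα' b a (α'.symm h) hb))
  · exact Setoid.ext_iff.mp hnp ⟨a, ha⟩ ⟨b, hb⟩

end Restriction

lemma KXY_nonempty (n : ℕ) (i : Fin (n - 1)) : (KXY n i).Nonempty :=
  ⟨_, Finset.mem_insert_self _ _⟩

end LRH

open LRH in
theorem statement7_general {n : ℕ} (k : ℕ)
    (ι : Fin k → Fin (n - 1)) (z : Fin (n - 1)) :
    (∀ α ∈ NC2Set (KXY n) ι,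
      (∀ i j : Fin k, α.r i j → (ι i = z ↔ ι j = z)) ∧
      IsPairPartition (restrictSetoid α (fun j => ι j = z)) ∧
      IsNoncrossing (restrictSetoid α (fun j => ι j = z)) ∧
      restrictSetoid α (fun j => ι j ≠ z) ∈
        NC2Set (KXY n) (fun j : {j : Fin k // ι j ≠ z} => ι j.val)) ∧
    (∀ α ∈ NC2Set (KXY n) ι, ∀ β ∈ NC2Set (KXY n) ι,
      restrictSetoid α (fun j => ι j = z) = restrictSetoid β (fun j => ι j = z) →
      restrictSetoid α (fun j => ι j ≠ z) = restrictSetoid β (fun j => ι j ≠ z) →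
      α = β) ∧
    (NC2Set (KXY n) ι).ncard ≤
      {γ : Setoid {j : Fin k // ι j = z} | IsPairPartition γ ∧ IsNoncrossing γ}.ncard *
        (NC2Set (KXY n) (fun j : {j : Fin k // ι j ≠ z} => ι j.val)).ncard := by
  have fiber_closed : ∀ α ∈ NC2Set (KXY n) ι, ∀ i j, α.r i j → ι i = z → ι j = z :=
    fun α hα i j h hi => (hα.2.1 h).symm.trans hi
  have compl_closed : ∀ α ∈ NC2Set (KXY n) ι, ∀ i j, α.r i j → ι i ≠ z → ι j ≠ z :=
    fun α hα i j h hi hj => hi ((hα.2.1 h).trans hj)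
  have restrict_inj : ∀ α ∈ NC2Set (KXY n) ι, ∀ β ∈ NC2Set (KXY n) ι,
      restrictSetoid α (fun j => ι j = z) = restrictSetoid β (fun j => ι j = z) →
      restrictSetoid α (fun j => ι j ≠ z) = restrictSetoid β (fun j => ι j ≠ z) → α = β :=
    fun α hα β hβ => eq_of_restrictSetoid_eq (fiber_closed α hα) (fiber_closed β hβ)
  refine ⟨fun α hα => ⟨fun i j h => ⟨fiber_closed α hα i j h, fiber_closed α hα j i (α.symm h)⟩,
    isPairPartition_restrictSetoid hα.1 (fiber_closed α hα),
    restrictSetoid_isNoncrossing (KXY_nonempty n) hα.2 z,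
    restrictSetoid_mem_NC2Set hα (compl_closed α hα)⟩, restrict_inj, ?_⟩
  rw [← Set.ncard_prod]
  exact Set.ncard_le_ncard_of_injOn
    (fun α => (restrictSetoid α (fun j => ι j = z), restrictSetoid α (fun j => ι j ≠ z)))
    (fun α hα => ⟨⟨isPairPartition_restrictSetoid hα.1 (fiber_closed α hα),
      restrictSetoid_isNoncrossing (KXY_nonempty n) hα.2 z⟩,
      restrictSetoid_mem_NC2Set hα (compl_closed α hα)⟩)
    (fun α hα β hβ h => restrict_inj α hα β hβ (congrArg Prod.fst h) (congrArg Prod.snd h))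

open LRH in
/-- XY-model: every (ε,ι)-noncrossing pair partition splits along
`J₁ = {j : ι_j = 1}` (`z` below denotes the first index, i.e. the value 1) into a
noncrossing pair partition of `J₁` and an element of `NC₂^{(ε',ι')}` of the complement;
the resulting map is injective, so the cardinalities multiply. -/
theorem statement7 {n : ℕ} (hn : 3 ≤ n) (k : ℕ) (hk : 1 ≤ k)
    (ι : Fin k → Fin (n - 1)) (z : Fin (n - 1)) (hz : (z : ℕ) = 0) :
    (∀ α ∈ NC2Set (KXY n) ι,
      (∀ i j : Fin k, α.r i j → (ι i = z ↔ ι j = z)) ∧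
      IsPairPartition (restrictSetoid α (fun j => ι j = z)) ∧
      IsNoncrossing (restrictSetoid α (fun j => ι j = z)) ∧
      restrictSetoid α (fun j => ι j ≠ z) ∈
        NC2Set (KXY n) (fun j : {j : Fin k // ι j ≠ z} => ι j.val)) ∧
    (∀ α ∈ NC2Set (KXY n) ι, ∀ β ∈ NC2Set (KXY n) ι,
      restrictSetoid α (fun j => ι j = z) = restrictSetoid β (fun j => ι j = z) →
      restrictSetoid α (fun j => ι j ≠ z) = restrictSetoid β (fun j => ι j ≠ z) →
      α = β) ∧
    (NC2Set (KXY n) ι).ncard ≤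
      {γ : Setoid {j : Fin k // ι j = z} | IsPairPartition γ ∧ IsNoncrossing γ}.ncard *
        (NC2Set (KXY n) (fun j : {j : Fin k // ι j ≠ z} => ι j.val)).ncard :=
  statement7_general k ι z
end
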